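/- Let D = H ∪ H̃ be a 2h-run foldover OofA design on m components with h ≥ 2 and all 2h runs distinct, and set q = m(m−1)/2. Then k_min(D) = min_{1≤i<j≤h} min{ k(x_i,x_j), q − k(x_i,x_j) }, and k_{m2}(D) = [ h q² + 2 Σ_{1≤i<j≤h} ( k(x_i,x_j)² + (q − k(x_i,x_j))² ) ] / ( h(2h−1) ). -/

import Mathlib

/-- A run (addition order) on `m` components: position `r` receives component `x r`.
The position map `π_x` is `x.symm`. -/
abbrev Run (m : ℕ) := Equiv.Perm (Fin m)

/-- Kendall tau distance between two runs. -/
def kendall {m : ℕ} (x y : Run m) : ℕ :=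
  (Finset.univ.filter fun p : Fin m × Fin m =>
    p.1 < p.2 ∧
      (((x.symm p.1 : ℕ) : ℤ) - ((x.symm p.2 : ℕ) : ℤ)) *
        (((y.symm p.1 : ℕ) : ℤ) - ((y.symm p.2 : ℕ) : ℤ)) < 0).card

/-- The foldover (reverse) of a run: `x̃ r = x (m+1-r)` (positions reversed). -/
def revRun {m : ℕ} (x : Run m) : Run m := Fin.revPerm.trans x

/-- The `2h`-run foldover design `D = H ∪ H̃` generated by a half-design
`H = (x_1, …, x_h)`: its first `h` rows are the `x_i` and its last `h` rows
are their reverses `x̃_i`. -/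
def foldover {m h : ℕ} (H : Fin h → Run m) : Fin (h + h) → Run m :=
  Fin.append H fun i => revRun (H i)

/-- Average pairwise Kendall tau distance of an `n`-run design. -/
noncomputable def kave {m n : ℕ} (D : Fin n → Run m) : ℝ :=
  (∑ p ∈ Finset.univ.filter (fun p : Fin n × Fin n => p.1 < p.2),
      (kendall (D p.1) (D p.2) : ℝ)) / (n.choose 2 : ℝ)

/-- Second moment of the pairwise Kendall tau distances of an `n`-run design. -/
noncomputable def km2 {m n : ℕ} (D : Fin n → Run m) : ℝ :=
  (∑ p ∈ Finset.univ.filter (fun p : Fin n × Fin n => p.1 < p.2),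
      (kendall (D p.1) (D p.2) : ℝ) ^ 2) / (n.choose 2 : ℝ)

/-- Minimum pairwise Kendall tau distance of a design. -/
noncomputable def kmin {m n : ℕ} (D : Fin n → Run m) : ℕ :=
  sInf {v : ℕ | ∃ i j : Fin n, i < j ∧ kendall (D i) (D j) = v}

open Finset

lemma revRun_symm_apply {m : ℕ} (y : Run m) (a : Fin m) :
    (revRun y).symm a = (y.symm a).rev := rfl

lemma rev_diff {m : ℕ} (a b : Fin m) :
    (((a.rev : ℕ) : ℤ) - ((b.rev : ℕ) : ℤ)) = ((b : ℕ) : ℤ) - ((a : ℕ) : ℤ) := by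
  have ha := a.is_lt
  have hb := b.is_lt
  have h1 : (a.rev : ℕ) = m - (a + 1) := Fin.val_rev a
  have h2 : (b.rev : ℕ) = m - (b + 1) := Fin.val_rev b
  omega

lemma kendall_comm {m : ℕ} (x y : Run m) : kendall x y = kendall y x := by
  unfold kendall
  congr 1
  apply Finset.filter_congr
  intro p _
  rw [mul_comm]

lemma kendall_self {m : ℕ} (x : Run m) : kendall x x = 0 := by
  unfold kendall
  rw [Finset.card_eq_zero, Finset.filter_eq_empty_iff]
  intro p _
  rintro ⟨-, hlt⟩
  exact absurd hlt (not_lt.2 (mul_self_nonneg _))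

lemma kendall_rev_rev {m : ℕ} (x y : Run m) :
    kendall (revRun x) (revRun y) = kendall x y := by
  unfold kendall
  congr 1
  apply Finset.filter_congr
  intro p _
  simp only [revRun_symm_apply, rev_diff]
  constructor <;> (rintro ⟨h1, h2⟩; exact ⟨h1, by nlinarith⟩)


lemma kendall_add_rev {m : ℕ} (x y : Run m) :
    kendall x y + kendall x (revRun y) =
      (Finset.univ.filter fun p : Fin m × Fin m => p.1 < p.2).card := by
  unfold kendall
  have h1 : ∀ z : Run m, (Finset.univ.filter fun p : Fin m × Fin m =>
      p.1 < p.2 ∧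
      (((x.symm p.1 : ℕ) : ℤ) - ((x.symm p.2 : ℕ) : ℤ)) *
        (((z.symm p.1 : ℕ) : ℤ) - ((z.symm p.2 : ℕ) : ℤ)) < 0) =
      (Finset.univ.filter fun p : Fin m × Fin m => p.1 < p.2).filter
        (fun p => (((x.symm p.1 : ℕ) : ℤ) - ((x.symm p.2 : ℕ) : ℤ)) *
        (((z.symm p.1 : ℕ) : ℤ) - ((z.symm p.2 : ℕ) : ℤ)) < 0) := by
    intro z; rw [Finset.filter_filter]
  rw [h1, h1]
  have key := Finset.card_filter_add_card_filter_not
    (s := Finset.univ.filter fun p : Fin m × Fin m => p.1 < p.2)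
    (p := fun p : Fin m × Fin m =>
      (((x.symm p.1 : ℕ) : ℤ) - ((x.symm p.2 : ℕ) : ℤ)) *
        (((y.symm p.1 : ℕ) : ℤ) - ((y.symm p.2 : ℕ) : ℤ)) < 0)
  rw [← key]
  congr 1
  congr 1
  apply Finset.filter_congr
  intro p hp
  simp only [Finset.mem_filter] at hp
  have hne : p.1 ≠ p.2 := ne_of_lt hp.2
  have hx : (((x.symm p.1 : ℕ) : ℤ) - ((x.symm p.2 : ℕ) : ℤ)) ≠ 0 := by
    intro hc
    exact hne (x.symm.injective (Fin.ext (by omega)))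
  have hy : (((y.symm p.1 : ℕ) : ℤ) - ((y.symm p.2 : ℕ) : ℤ)) ≠ 0 := by
    intro hc
    exact hne (y.symm.injective (Fin.ext (by omega)))
  set A := (((x.symm p.1 : ℕ) : ℤ) - ((x.symm p.2 : ℕ) : ℤ)) with hA
  set B := (((y.symm p.1 : ℕ) : ℤ) - ((y.symm p.2 : ℕ) : ℤ)) with hB
  have hAB : A * B ≠ 0 := mul_ne_zero hx hy
  have hrev : (((revRun y).symm p.1 : ℕ) : ℤ) - (((revRun y).symm p.2 : ℕ) : ℤ) = -B := by
    simp only [revRun_symm_apply, rev_diff]; rw [hB]; ring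
  rw [hrev, mul_neg, neg_lt_zero]
  constructor
  · intro hpos; exact not_lt.2 hpos.le
  · intro hnlt
    exact ((not_lt.1 hnlt).lt_of_ne (Ne.symm hAB))

lemma card_lt_pairs (m : ℕ) :
    (Finset.univ.filter fun p : Fin m × Fin m => p.1 < p.2).card = m * (m - 1) / 2 := by
  have hswap : (Finset.univ.filter fun p : Fin m × Fin m => p.1 < p.2).card =
      (Finset.univ.filter fun p : Fin m × Fin m => p.2 < p.1).card := by
    apply Finset.card_nbij' (fun p => p.swap) (fun p => p.swap) <;>
      intro a ha <;> simp_all [Finset.mem_filter]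
  have hcover : (Finset.univ : Finset (Fin m × Fin m)) =
      ((Finset.univ.filter fun p : Fin m × Fin m => p.1 < p.2) ∪
        (Finset.univ.filter fun p : Fin m × Fin m => p.2 < p.1)) ∪
        (Finset.univ.filter fun p : Fin m × Fin m => p.1 = p.2) := by
    ext p
    simp only [Finset.mem_union, Finset.mem_filter, Finset.mem_univ, true_and]
    exact iff_of_true trivial (by
      rcases lt_trichotomy p.1 p.2 with h | h | h
      exacts [Or.inl (Or.inl h), Or.inr h, Or.inl (Or.inr h)])
  have hd1 : Disjoint (Finset.univ.filter fun p : Fin m × Fin m => p.1 < p.2)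
      (Finset.univ.filter fun p : Fin m × Fin m => p.2 < p.1) := by
    rw [Finset.disjoint_left]
    intro p hp hq
    simp only [Finset.mem_filter] at hp hq
    exact absurd hq.2 (not_lt.2 hp.2.le)
  have hd2 : Disjoint ((Finset.univ.filter fun p : Fin m × Fin m => p.1 < p.2) ∪
        (Finset.univ.filter fun p : Fin m × Fin m => p.2 < p.1))
      (Finset.univ.filter fun p : Fin m × Fin m => p.1 = p.2) := by
    rw [Finset.disjoint_left]
    intro p hp hq
    simp only [Finset.mem_union, Finset.mem_filter] at hp hq
    rcases hp with h | h
    · exact absurd hq.2 (ne_of_lt h.2)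
    · exact absurd hq.2.symm (ne_of_lt h.2)
  have hcard : ((Finset.univ : Finset (Fin m × Fin m))).card = m * m := by simp
  rw [hcover, Finset.card_union_of_disjoint hd2, Finset.card_union_of_disjoint hd1] at hcard
  have hdiag : (Finset.univ.filter fun p : Fin m × Fin m => p.1 = p.2).card = m := by
    rw [show (Finset.univ.filter fun p : Fin m × Fin m => p.1 = p.2) =
      Finset.univ.image (fun i : Fin m => (i, i)) from ?_]
    · rw [Finset.card_image_of_injective _ (fun a b hab => congrArg Prod.fst hab)]
      simp
    · ext p
      simp only [Finset.mem_filter, Finset.mem_univ, true_and, Finset.mem_image]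
      constructor
      · intro hp; exact ⟨p.1, by rw [Prod.ext_iff]; exact ⟨rfl, hp⟩⟩
      · rintro ⟨a, rfl⟩; rfl
  have hme : m * (m - 1) = m * m - m := by
    rw [← Nat.pred_eq_sub_one, Nat.mul_pred]
  omega

lemma sum_pairs {n : ℕ} (f : Fin n → Fin n → ℝ) (hsymm : ∀ i j, f i j = f j i) :
    ∑ i, ∑ j, f i j =
      (∑ i, f i i) +
        2 * ∑ p ∈ Finset.univ.filter (fun p : Fin n × Fin n => p.1 < p.2), f p.1 p.2 := by
  have hcover : (Finset.univ : Finset (Fin n × Fin n)) =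
      ((Finset.univ.filter fun p : Fin n × Fin n => p.1 < p.2) ∪
        (Finset.univ.filter fun p : Fin n × Fin n => p.2 < p.1)) ∪
        (Finset.univ.filter fun p : Fin n × Fin n => p.1 = p.2) := by
    ext p
    simp only [Finset.mem_union, Finset.mem_filter, Finset.mem_univ, true_and]
    exact iff_of_true trivial (by
      rcases lt_trichotomy p.1 p.2 with h | h | h
      exacts [Or.inl (Or.inl h), Or.inr h, Or.inl (Or.inr h)])
  have hd1 : Disjoint (Finset.univ.filter fun p : Fin n × Fin n => p.1 < p.2)
      (Finset.univ.filter fun p : Fin n × Fin n => p.2 < p.1) := by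
    rw [Finset.disjoint_left]
    intro p hp hq
    simp only [Finset.mem_filter] at hp hq
    exact absurd hq.2 (not_lt.2 hp.2.le)
  have hd2 : Disjoint ((Finset.univ.filter fun p : Fin n × Fin n => p.1 < p.2) ∪
        (Finset.univ.filter fun p : Fin n × Fin n => p.2 < p.1))
      (Finset.univ.filter fun p : Fin n × Fin n => p.1 = p.2) := by
    rw [Finset.disjoint_left]
    intro p hp hq
    simp only [Finset.mem_union, Finset.mem_filter] at hp hq
    rcases hp with h | h
    · exact absurd hq.2 (ne_of_lt h.2)
    · exact absurd hq.2.symm (ne_of_lt h.2)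
  have h0 : ∑ i, ∑ j, f i j = ∑ p : Fin n × Fin n, f p.1 p.2 := by
    rw [Fintype.sum_prod_type]
  have hgt : ∑ p ∈ (Finset.univ.filter fun p : Fin n × Fin n => p.2 < p.1), f p.1 p.2 =
      ∑ p ∈ (Finset.univ.filter fun p : Fin n × Fin n => p.1 < p.2), f p.1 p.2 := by
    apply Finset.sum_nbij' (fun p : Fin n × Fin n => p.swap) (fun p : Fin n × Fin n => p.swap)
    · intro a ha; simp only [Finset.mem_filter, Finset.mem_univ, true_and] at *; exact ha
    · intro a ha; simp only [Finset.mem_filter, Finset.mem_univ, true_and] at *; exact ha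
    · intro a _; exact Prod.swap_swap a
    · intro a _; exact Prod.swap_swap a
    · intro a _; exact hsymm a.1 a.2
  have hdiag : ∑ p ∈ (Finset.univ.filter fun p : Fin n × Fin n => p.1 = p.2), f p.1 p.2 =
      ∑ i, f i i := by
    apply Finset.sum_nbij' (fun p : Fin n × Fin n => p.1) (fun i : Fin n => (i, i))
    · intro a _; exact Finset.mem_univ _
    · intro a _; simp
    · intro a ha
      simp only [Finset.mem_filter, Finset.mem_univ, true_and] at ha
      rw [Prod.ext_iff]; exact ⟨rfl, ha⟩
    · intro a _; rfl
    · intro a ha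
      simp only [Finset.mem_filter, Finset.mem_univ, true_and] at ha
      rw [ha]
  rw [h0]
  conv_lhs => rw [hcover]
  rw [Finset.sum_union hd2, Finset.sum_union hd1, hgt, hdiag]
  ring


lemma kendall_add_rev' {m : ℕ} (x y : Run m) :
    kendall x y + kendall x (revRun y) = m * (m - 1) / 2 := by
  rw [kendall_add_rev, card_lt_pairs]

lemma kendall_le {m : ℕ} (x y : Run m) : kendall x y ≤ m * (m - 1) / 2 := by
  have := kendall_add_rev' x y; omega

lemma kendall_rev_right {m : ℕ} (x y : Run m) :
    kendall x (revRun y) = m * (m - 1) / 2 - kendall x y := by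
  have := kendall_add_rev' x y; omega

lemma kendall_rev_left {m : ℕ} (x y : Run m) :
    kendall (revRun x) y = m * (m - 1) / 2 - kendall x y := by
  rw [kendall_comm, kendall_rev_right, kendall_comm]

lemma fin_add_cases {h : ℕ} (k : Fin (h + h)) :
    (∃ a : Fin h, k = Fin.castAdd h a) ∨ (∃ a : Fin h, k = Fin.natAdd h a) := by
  have hk := k.is_lt
  by_cases hlt : (k : ℕ) < h
  · exact Or.inl ⟨⟨k, hlt⟩, by apply Fin.ext; simp⟩
  · refine Or.inr ⟨⟨(k : ℕ) - h, by omega⟩, ?_⟩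
    apply Fin.ext; simp [Fin.natAdd]; omega


/-- For a nonreplicated foldover design with `n = 2h` runs and `q = m(m−1)/2`,
both `k_min(D)` and `k_{m2}(D)` are determined by the representative half-design. -/
theorem stmt17 {m h : ℕ} (hm : 2 ≤ m) (hh : 2 ≤ h) (H : Fin h → Run m)
    (hdist : Function.Injective (foldover H)) :
    kmin (foldover H) =
      sInf {v : ℕ | ∃ i j : Fin h, i < j ∧
        v = min (kendall (H i) (H j)) (m * (m - 1) / 2 - kendall (H i) (H j))} ∧
    km2 (foldover H) =
      ((h : ℝ) * ((m * (m - 1) / 2 : ℕ) : ℝ) ^ 2 +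
          2 * ∑ p ∈ Finset.univ.filter (fun p : Fin h × Fin h => p.1 < p.2),
            ((kendall (H p.1) (H p.2) : ℝ) ^ 2 +
              (((m * (m - 1) / 2 : ℕ) : ℝ) - (kendall (H p.1) (H p.2) : ℝ)) ^ 2)) /
        ((h : ℝ) * (2 * (h : ℝ) - 1)) := by
  have hfl : ∀ a : Fin h, foldover H (Fin.castAdd h a) = H a := fun a =>
    Fin.append_left H _ a
  have hfr : ∀ a : Fin h, foldover H (Fin.natAdd h a) = revRun (H a) := fun a =>
    Fin.append_right H _ a
  have hclt : ∀ a b : Fin h, Fin.castAdd h a < Fin.castAdd h b ↔ a < b :=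
    fun a b => Iff.rfl
  have hnlt : ∀ a b : Fin h, Fin.natAdd h a < Fin.natAdd h b ↔ a < b := by
    intro a b
    simp only [Fin.lt_def, Fin.coe_natAdd]
    omega
  have hcn : ∀ a b : Fin h, Fin.castAdd h a < Fin.natAdd h b := by
    intro a b
    simp only [Fin.lt_def, Fin.coe_castAdd, Fin.coe_natAdd]
    have := a.is_lt; omega
  have h01 : (⟨0, by omega⟩ : Fin h) < (⟨1, by omega⟩ : Fin h) :=
    Fin.mk_lt_mk.2 (by omega)
  constructor
  · -- kmin part
    apply le_antisymm
    · have hTne : {v : ℕ | ∃ i j : Fin h, i < j ∧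
          v = min (kendall (H i) (H j)) (m * (m - 1) / 2 - kendall (H i) (H j))}.Nonempty :=
        ⟨_, ⟨⟨0, by omega⟩, ⟨1, by omega⟩, h01, rfl⟩⟩
      obtain ⟨i, j, hij, hv⟩ := Nat.sInf_mem hTne
      apply Nat.sInf_le
      rcases le_total (kendall (H i) (H j))
          (m * (m - 1) / 2 - kendall (H i) (H j)) with hle | hle
      · rw [hv, min_eq_left hle]
        exact ⟨Fin.castAdd h i, Fin.castAdd h j, (hclt i j).2 hij,
          by rw [hfl, hfl]⟩
      · rw [hv, min_eq_right hle]
        exact ⟨Fin.castAdd h i, Fin.natAdd h j, hcn i j,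
          by rw [hfl, hfr, kendall_rev_right]⟩
    · have hSne : {v : ℕ | ∃ i j : Fin (h + h), i < j ∧
          kendall (foldover H i) (foldover H j) = v}.Nonempty :=
        ⟨_, ⟨Fin.castAdd h ⟨0, by omega⟩, Fin.natAdd h ⟨0, by omega⟩,
          hcn _ _, rfl⟩⟩
      obtain ⟨i, j, hij, hv⟩ := Nat.sInf_mem hSne
      unfold kmin
      rw [← hv]
      have hTle : ∀ a b : Fin h, a < b →
          sInf {v : ℕ | ∃ i j : Fin h, i < j ∧
            v = min (kendall (H i) (H j)) (m * (m - 1) / 2 - kendall (H i) (H j))} ≤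
          min (kendall (H a) (H b)) (m * (m - 1) / 2 - kendall (H a) (H b)) :=
        fun a b hab => Nat.sInf_le ⟨a, b, hab, rfl⟩
      rcases fin_add_cases i with ⟨a, rfl⟩ | ⟨a, rfl⟩ <;>
        rcases fin_add_cases j with ⟨b, rfl⟩ | ⟨b, rfl⟩
      · have hab := (hclt a b).1 hij
        rw [hfl, hfl]
        exact le_trans (hTle a b hab) (min_le_left _ _)
      · rw [hfl, hfr, kendall_rev_right]
        rcases lt_trichotomy a b with hab | rfl | hab
        · exact le_trans (hTle a b hab) (min_le_right _ _)
        · rw [kendall_self, Nat.sub_zero]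
          refine le_trans (hTle ⟨0, by omega⟩ ⟨1, by omega⟩ h01) ?_
          exact le_trans (min_le_right _ _) (Nat.sub_le _ _)
        · rw [kendall_comm]
          exact le_trans (hTle b a hab) (min_le_right _ _)
      · exfalso
        simp only [Fin.lt_def, Fin.coe_natAdd, Fin.coe_castAdd] at hij
        have := b.is_lt; omega
      · have hab := (hnlt a b).1 hij
        rw [hfr, hfr, kendall_rev_rev]
        exact le_trans (hTle a b hab) (min_le_left _ _)
  · -- km2 part
    unfold km2
    have hden : (((h + h).choose 2 : ℕ) : ℝ) = (h : ℝ) * (2 * (h : ℝ) - 1) := by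
      obtain ⟨k, rfl⟩ : ∃ k, h = k + 1 := ⟨h - 1, by omega⟩
      rw [Nat.choose_two_right]
      have e1 : (k + 1 + (k + 1)) * (k + 1 + (k + 1) - 1) = 2 * ((k + 1) * (2 * k + 1)) := by
        have e0 : k + 1 + (k + 1) - 1 = 2 * k + 1 := by omega
        rw [e0]; ring
      rw [e1, Nat.mul_div_cancel_left _ (by norm_num : 0 < 2)]
      push_cast
      ring
    rw [hden]
    congr 1
    set q : ℕ := m * (m - 1) / 2 with hqdef
    have hcast : ∀ a b : Fin h, ((kendall (H a) (revRun (H b)) : ℕ) : ℝ) =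
        (q : ℝ) - (kendall (H a) (H b) : ℝ) := by
      intro a b
      rw [kendall_rev_right, Nat.cast_sub (kendall_le _ _)]
    have hsplit : ∀ G : Fin (h + h) → ℝ, ∑ i : Fin (h + h), G i =
        ∑ a : Fin h, G (Fin.castAdd h a) + ∑ a : Fin h, G (Fin.natAdd h a) :=
      fun G => Fin.sum_univ_add G
    have hmain := sum_pairs (fun i j : Fin (h + h) =>
      (kendall (foldover H i) (foldover H j) : ℝ) ^ 2)
      (fun i j => by beta_reduce; rw [kendall_comm])
    beta_reduce at hmain
    have hdiag0 : ∑ i : Fin (h + h), (kendall (foldover H i) (foldover H i) : ℝ) ^ 2 = 0 := by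
      apply Finset.sum_eq_zero; intro i _; rw [kendall_self]; norm_num
    rw [hdiag0, zero_add] at hmain
    have hQ : ∑ i : Fin (h + h), ∑ j : Fin (h + h),
        (kendall (foldover H i) (foldover H j) : ℝ) ^ 2 =
        ((∑ a : Fin h, ∑ b : Fin h, (kendall (H a) (H b) : ℝ) ^ 2) +
          (∑ a : Fin h, ∑ b : Fin h, ((q : ℝ) - (kendall (H a) (H b) : ℝ)) ^ 2)) +
        ((∑ a : Fin h, ∑ b : Fin h, ((q : ℝ) - (kendall (H a) (H b) : ℝ)) ^ 2) +
          (∑ a : Fin h, ∑ b : Fin h, (kendall (H a) (H b) : ℝ) ^ 2)) := by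
      rw [hsplit]
      congr 1
      · rw [← Finset.sum_add_distrib]
        apply Finset.sum_congr rfl
        intro a _
        rw [hsplit]
        congr 1
        · apply Finset.sum_congr rfl; intro b _; rw [hfl, hfl]
        · apply Finset.sum_congr rfl; intro b _; rw [hfl, hfr, hcast]
      · rw [← Finset.sum_add_distrib]
        apply Finset.sum_congr rfl
        intro a _
        rw [hsplit]
        congr 1
        · apply Finset.sum_congr rfl; intro b _
          rw [hfr, hfl, kendall_comm, hcast, kendall_comm]
        · apply Finset.sum_congr rfl; intro b _; rw [hfr, hfr, kendall_rev_rev]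
    rw [hQ] at hmain
    have hA := sum_pairs (fun a b : Fin h => (kendall (H a) (H b) : ℝ) ^ 2)
      (fun a b => by beta_reduce; rw [kendall_comm])
    beta_reduce at hA
    have hAdiag : ∑ a : Fin h, (kendall (H a) (H a) : ℝ) ^ 2 = 0 := by
      apply Finset.sum_eq_zero; intro a _; rw [kendall_self]; norm_num
    rw [hAdiag, zero_add] at hA
    have hB := sum_pairs (fun a b : Fin h => ((q : ℝ) - (kendall (H a) (H b) : ℝ)) ^ 2)
      (fun a b => by beta_reduce; rw [kendall_comm])
    beta_reduce at hB
    have hBdiag : ∑ a : Fin h, ((q : ℝ) - (kendall (H a) (H a) : ℝ)) ^ 2 =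
        (h : ℝ) * (q : ℝ) ^ 2 := by
      rw [Finset.sum_congr rfl (fun a _ => by rw [kendall_self]; norm_num :
        ∀ a ∈ Finset.univ, ((q : ℝ) - (kendall (H a) (H a) : ℝ)) ^ 2 = (q : ℝ) ^ 2)]
      rw [Finset.sum_const, Finset.card_univ, Fintype.card_fin, nsmul_eq_mul]
    rw [hBdiag] at hB
    rw [hA, hB] at hmain
    rw [Finset.sum_add_distrib]
    linarith [hmain]
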